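/- arXiv:math/0701377 — 5 statements merged into one kernel-verified Lean document; each statement's English description precedes it below -/
import Mathlib

section
/- Let V be a vector space over a field F, let P₀,…,P_ℓ : V → V be mutually commuting linear endomorphisms, and suppose there exist Q₀,…,Q_ℓ : V → V commuting with all the Pᵢ such that id_V = ∑ᵢ QᵢPⁱ (where Pⁱ = ∏_{j≠i} P_j). Set P = P₀⋯P_ℓ. Then for any fixed f ∈ V, the map F(u) = (P⁰u, …, P^ℓu) sends solutions of Pu = f to solutions of the system Pᵢuᵢ = f (i = 0,…,ℓ), the map B(u₀,…,u_ℓ) = ∑ᵢ Qᵢuᵢ sends solutions of the system back to solutions of Pu = f, and B∘F = id on V while F∘B is the identity on the set of solutions of the system. -/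
open LinearMap

private lemma key {M : Type*} [Monoid M] {n : ℕ} (a : Fin n → M) (i : Fin n)
    (h : ∀ j, Commute (a i) (a j)) :
    (List.ofFn a).prod = a i * (List.ofFn fun j => if j = i then 1 else a j).prod := by
  have hset : (List.ofFn fun j => if j = i then 1 else a j) = (List.ofFn a).set i 1 := by
    apply List.ext_getElem
    · simp
    · intro k h1 h2
      simp only [List.getElem_ofFn, List.getElem_set, List.getElem_ofFn]
      by_cases hk : k = (i : ℕ)
      · simp [hk, Fin.ext_iff]
      · have h3 : ¬ ((⟨k, by simpa using h2⟩ : Fin n) = i) := by simp [Fin.ext_iff, hk]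
        rw [if_neg h3, if_neg (fun hh => hk hh.symm)]
  have hself : List.ofFn a = (List.ofFn a).set i (a i) := by
    apply List.ext_getElem
    · simp
    · intro k h1 h2
      simp only [List.getElem_set, List.getElem_ofFn]
      by_cases hk : k = (i : ℕ)
      · subst hk; simp
      · rw [if_neg (fun hh => hk hh.symm)]
  have hcomm : Commute (a i) (List.take i (List.ofFn a)).prod := by
    apply Commute.list_prod_right
    intro x hx
    have hm := List.mem_of_mem_take hx
    rw [List.mem_ofFn] at hm
    obtain ⟨j, rfl⟩ := hm
    exact h j
  have hi : (i : ℕ) < (List.ofFn a).length := by simp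
  rw [hset, List.prod_set, if_pos hi, mul_one]
  conv_lhs => rw [hself, List.prod_set, if_pos hi]
  rw [← mul_assoc, hcomm.eq]

/-- the inhomogeneous problem for a decomposition. -/
theorem stmt1 {F : Type*} [Field F] {V : Type*} [AddCommGroup V] [Module F V]
    (ℓ : ℕ) (P Q : Fin (ℓ + 1) → Module.End F V)
    (hPP : ∀ i j, P i * P j = P j * P i)
    (hPQ : ∀ i j, P i * Q j = Q j * P i)
    (Pt : Module.End F V) (hPt : Pt = (List.ofFn P).prod)
    (Pc : Fin (ℓ + 1) → Module.End F V)
    (hPc : ∀ i, Pc i = (List.ofFn fun j => if j = i then (1 : Module.End F V) else P j).prod)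
    (hid : (1 : Module.End F V) = ∑ i, Q i * Pc i)
    (f : V) :
    (∀ u : V, Pt u = f → ∀ i, (P i) ((Pc i) u) = f) ∧
    (∀ us : Fin (ℓ + 1) → V, (∀ i, (P i) (us i) = f) → Pt (∑ i, (Q i) (us i)) = f) ∧
    (∀ u : V, ∑ i, (Q i) ((Pc i) u) = u) ∧
    (∀ us : Fin (ℓ + 1) → V, (∀ i, (P i) (us i) = f) →
      ∀ k, (Pc k) (∑ i, (Q i) (us i)) = us k) := by
  -- generic commutation with products of (1 or P j)'s
  have hPprod : ∀ (i : Fin (ℓ + 1)) (g : Fin (ℓ + 1) → Module.End F V),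
      (∀ j, g j = 1 ∨ g j = P j) → Commute (P i) (List.ofFn g).prod := by
    intro i g hg
    apply Commute.list_prod_right
    intro x hx
    rw [List.mem_ofFn] at hx
    obtain ⟨j, rfl⟩ := hx
    rcases hg j with h | h
    · rw [h]; exact Commute.one_right _
    · rw [h]; exact hPP i j
  have hQprod : ∀ (i : Fin (ℓ + 1)) (g : Fin (ℓ + 1) → Module.End F V),
      (∀ j, g j = 1 ∨ g j = P j) → Commute (Q i) (List.ofFn g).prod := by
    intro i g hg
    apply Commute.list_prod_right
    intro x hx
    rw [List.mem_ofFn] at hx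
    obtain ⟨j, rfl⟩ := hx
    rcases hg j with h | h
    · rw [h]; exact Commute.one_right _
    · rw [h]; exact (hPQ j i).symm
  have hQPc : ∀ i k, Commute (Q i) (Pc k) := by
    intro i k
    rw [hPc]
    exact hQprod i _ (fun j => by by_cases h : j = k <;> simp [h])
  have hQPt : ∀ i, Commute (Q i) Pt := by
    intro i
    rw [hPt]
    exact hQprod i _ (fun j => Or.inr rfl)
  have hPiPci : ∀ i, Pt = P i * Pc i := by
    intro i
    rw [hPt, hPc i]
    exact key P i (fun j => hPP i j)
  have hPciPi : ∀ i, Pt = Pc i * P i := by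
    intro i
    have hc : Commute (P i)
        (List.ofFn fun j => if j = i then (1 : Module.End F V) else P j).prod :=
      hPprod i _ (fun j => by by_cases h : j = i <;> simp [h])
    rw [hPiPci i, hPc i]
    exact hc.eq
  -- symmetry: Pc k (us i) vs Pc i (us k)
  have hsym : ∀ (us : Fin (ℓ + 1) → V), (∀ i, (P i) (us i) = f) →
      ∀ i k, (Pc k) (us i) = (Pc i) (us k) := by
    intro us hus i k
    by_cases hik : i = k
    · subst hik; rfl
    · have hdecomp : ∀ (i' k' : Fin (ℓ + 1)), i' ≠ k' →
          Pc k' = (List.ofFn fun j => if j = i' ∨ j = k' then (1 : Module.End F V) else P j).prod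
            * P i' := by
        intro i' k' hne
        set a : Fin (ℓ + 1) → Module.End F V := fun j => if j = k' then 1 else P j with ha
        have hai : a i' = P i' := by simp [ha, hne]
        have hkey := key a i' (fun j => by
          rw [hai]
          by_cases h : j = k'
          · have : a j = 1 := by simp [ha, h]
            rw [this]; exact Commute.one_right _
          · have : a j = P j := by simp [ha, h]
            rw [this]; exact hPP i' j)
        have hfun : (List.ofFn fun j => if j = i' then (1 : Module.End F V) else a j)
            = List.ofFn fun j => if j = i' ∨ j = k' then (1 : Module.End F V) else P j := by
          congr 1
          funext j
          by_cases h1 : j = i' <;> by_cases h2 : j = k' <;> simp [ha, h1, h2]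
        rw [hPc k', hkey, hai, hfun]
        have hc : Commute (P i')
            (List.ofFn fun j => if j = i' ∨ j = k' then (1 : Module.End F V) else P j).prod :=
          hPprod i' _ (fun j => by by_cases h1 : j = i' <;> by_cases h2 : j = k' <;> simp [h1, h2])
        exact hc.eq
      have h1 := hdecomp i k hik
      have h2 := hdecomp k i (Ne.symm hik)
      have hRR : (List.ofFn fun j => if j = i ∨ j = k then (1 : Module.End F V) else P j)
          = List.ofFn fun j => if j = k ∨ j = i then (1 : Module.End F V) else P j := by
        congr 1; funext j
        by_cases h1 : j = i <;> by_cases h2 : j = k <;> simp [h1, h2]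
      rw [h1, h2, hRR, Module.End.mul_apply, Module.End.mul_apply, hus i, hus k]
  refine ⟨?_, ?_, ?_, ?_⟩
  · intro u hu i
    have : (P i) ((Pc i) u) = Pt u := by rw [hPiPci i]; rfl
    rw [this, hu]
  · intro us hus
    rw [map_sum]
    have hterm : ∀ i, Pt ((Q i) (us i)) = (Q i) ((Pc i) f) := by
      intro i
      calc Pt ((Q i) (us i)) = (Pt * Q i) (us i) := rfl
        _ = (Q i * Pt) (us i) := by rw [← (hQPt i).eq]
        _ = (Q i) (Pt (us i)) := rfl
        _ = (Q i) ((Pc i) ((P i) (us i))) := by rw [hPciPi i]; rfl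
        _ = (Q i) ((Pc i) f) := by rw [hus i]
    simp_rw [hterm]
    have : ∑ i, (Q i) ((Pc i) f) = ((∑ i, Q i * Pc i : Module.End F V)) f := by
      rw [LinearMap.sum_apply]; rfl
    rw [this, ← hid]; rfl
  · intro u
    have : ∑ i, (Q i) ((Pc i) u) = ((∑ i, Q i * Pc i : Module.End F V)) u := by
      rw [LinearMap.sum_apply]; rfl
    rw [this, ← hid]; rfl
  · intro us hus k
    rw [map_sum]
    have hterm : ∀ i, (Pc k) ((Q i) (us i)) = (Q i) ((Pc i) (us k)) := by
      intro i
      calc (Pc k) ((Q i) (us i)) = (Pc k * Q i) (us i) := rfl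
        _ = (Q i * Pc k) (us i) := by rw [(hQPc i k).eq]
        _ = (Q i) ((Pc k) (us i)) := rfl
        _ = (Q i) ((Pc i) (us k)) := by rw [hsym us hus i k]
    simp_rw [hterm]
    have : ∑ i, (Q i) ((Pc i) (us k)) = ((∑ i, Q i * Pc i : Module.End F V)) (us k) := by
      rw [LinearMap.sum_apply]; rfl
    rw [this, ← hid]; rfl
end

section
/- Let V be a vector space over a field F and let P = P₀P₁⋯P_ℓ be a decomposition, i.e. the Pᵢ mutually commute and there exist Qᵢ commuting with all P_j such that id_V = ∑ᵢ QᵢPⁱ with Pⁱ = ∏_{j≠i} P_j. Then the range of P equals the intersection of the ranges of the Pᵢ, and the kernel of P is the internal direct sum of the kernels of the Pᵢ. -/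
/-!
Applying `1 = ∑ Qᵢ Pⁱ` to a vector `u` gives `u = ∑ Qᵢ Pⁱ u`. If `u = Pᵢ vᵢ` for every `i`, the
`i`-th term is `Qᵢ P vᵢ = P (Qᵢ vᵢ)`, so `u ∈ range P`. If `P u = 0`, the `i`-th term lies in
`ker Pᵢ`; conversely, since `Pᵢ` is a factor of `Pʲ` for `j ≠ i`, every decomposition `u = ∑ wⱼ`
with `wⱼ ∈ ker Pⱼ` satisfies `wᵢ = Qᵢ Pⁱ wᵢ = Qᵢ Pⁱ u`, which gives uniqueness.
-/

open LinearMap Finset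
open scoped IsMulCommutative

universe u

namespace List

theorem exists_commMonoid_lift {M : Type u} [Monoid M] {n : ℕ} {f : Fin n → M}
    (hf : ∀ i j, Commute (f i) (f j)) :
    ∃ (C : Type u) (_ : CommMonoid C) (φ : C →* M) (g : Fin n → C), (fun j => φ (g j)) = f := by
  have : IsMulCommutative (Submonoid.closure (Set.range f)) :=
    Submonoid.isMulCommutative_closure _ (by rintro _ ⟨i, rfl⟩ _ ⟨j, rfl⟩; exact hf i j)
  exact ⟨_, inferInstance, Submonoid.subtype _,
    fun j => (⟨f j, Submonoid.subset_closure ⟨j, rfl⟩⟩ : Submonoid.closure (Set.range f)), rfl⟩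

variable {M : Type*} [Monoid M] {n : ℕ}

theorem prod_ofFn_ite_eq_prod_erase {C : Type*} [CommMonoid C] (g : Fin n → C) (i : Fin n) :
    (ofFn fun j => if j = i then 1 else g j).prod = ∏ j ∈ univ.erase i, g j := by
  rw [prod_ofFn, ← filter_ne', prod_filter]
  exact prod_congr rfl fun j _ => by split_ifs <;> simp_all

theorem map_prod_ofFn_ite {C : Type*} [CommMonoid C] (φ : C →* M) (g : Fin n → C) (i : Fin n) :
    (ofFn fun j => if j = i then 1 else φ (g j)).prod = φ (∏ j ∈ univ.erase i, g j) := by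
  rw [← prod_ofFn_ite_eq_prod_erase, map_list_prod, map_ofFn]
  exact congrArg prod (ofFn_inj.mpr (funext fun j => by simp [apply_ite φ]))

variable {f : Fin n → M}

theorem prod_ofFn_eq_mul_prod_ofFn_ite (hf : ∀ i j, Commute (f i) (f j)) (i : Fin n) :
    (ofFn f).prod = f i * (ofFn fun j => if j = i then 1 else f j).prod := by
  obtain ⟨C, _, φ, g, rfl⟩ := exists_commMonoid_lift hf
  rw [map_prod_ofFn_ite, ← map_mul, mul_prod_erase _ _ (mem_univ i), ← prod_ofFn, map_list_prod,
    map_ofFn]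
  rfl

theorem exists_prod_ofFn_ite_eq_mul (hf : ∀ i j, Commute (f i) (f j)) {i j : Fin n}
    (hij : i ≠ j) : ∃ r, (ofFn fun k => if k = j then 1 else f k).prod = r * f i := by
  obtain ⟨C, _, φ, g, rfl⟩ := exists_commMonoid_lift hf
  obtain ⟨r, hr⟩ := dvd_prod_of_mem g (mem_erase.mpr ⟨hij, mem_univ i⟩)
  exact ⟨φ r, by rw [map_prod_ofFn_ite, hr, mul_comm, map_mul]⟩

end List

theorem Commute.prod_ofFn_ite {M : Type*} [Monoid M] {n : ℕ} {f : Fin n → M} {x : M}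
    (h : ∀ j, Commute x (f j)) (i : Fin n) :
    Commute x (List.ofFn fun j => if j = i then 1 else f j).prod :=
  Commute.list_prod_right _ _ fun y hy => by
    obtain ⟨k, rfl⟩ := List.mem_ofFn.mp hy
    split_ifs
    · exact Commute.one_right x
    · exact h k

section Decomposition

variable {R M ι : Type*} [Semiring R] [AddCommMonoid M] [Module R M]
  {P Q Pc : ι → Module.End R M} {Pt : Module.End R M}

theorem apply_mem_ker_of_mem_ker (hPt : ∀ i, P i * Pc i = Pt) (hPQ : ∀ i, Commute (P i) (Q i))
    {u : M} (hu : u ∈ ker Pt) (i : ι) : Q i (Pc i u) ∈ ker (P i) := by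
  rw [mem_ker] at hu ⊢
  calc P i (Q i (Pc i u)) = (Q i * (P i * Pc i)) u := by rw [← mul_assoc, ← (hPQ i).eq]; rfl
    _ = 0 := by rw [hPt, Module.End.mul_apply, hu, map_zero]

variable [Fintype ι]

theorem eq_sum_apply_of_sum_mul_eq_one (hid : ∑ i, Q i * Pc i = 1) (u : M) :
    u = ∑ i, Q i (Pc i u) := by
  simpa using (congrArg (· u) hid).symm

theorem range_eq_iInf_range (hPt : ∀ i, P i * Pc i = Pt) (hPPc : ∀ i, Commute (P i) (Pc i))
    (hQPt : ∀ i, Commute (Q i) Pt) (hid : ∑ i, Q i * Pc i = 1) :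
    range Pt = ⨅ i, range (P i) := by
  refine le_antisymm (le_iInf fun i => hPt i ▸ range_comp_le_range (Pc i) (P i)) fun u hu => ?_
  choose v hv using fun i => Submodule.mem_iInf _ |>.mp hu i
  refine ⟨∑ i, Q i (v i), ?_⟩
  have hPcP : ∀ i, Pc i * P i = Pt := fun i => (hPPc i).eq ▸ hPt i
  calc Pt (∑ i, Q i (v i)) = ∑ i, (Q i * (Pc i * P i)) (v i) := by
        simp_rw [hPcP, (hQPt _).eq, Module.End.mul_apply, map_sum]
    _ = ∑ i, Q i (Pc i u) := by simp_rw [Module.End.mul_apply, hv]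
    _ = u := (eq_sum_apply_of_sum_mul_eq_one hid u).symm

theorem eq_apply_sum_of_mem_ker (hid : ∑ i, Q i * Pc i = 1)
    (hker : ∀ i j, i ≠ j → ker (P i) ≤ ker (Pc j)) {w : ι → M} (hw : ∀ i, w i ∈ ker (P i))
    (i : ι) : w i = Q i (Pc i (∑ j, w j)) := by
  have hPc_sum : Pc i (∑ j, w j) = Pc i (w i) := by
    rw [map_sum]
    exact sum_eq_single i (fun j _ hji => hker j i hji (hw j)) (by simp)
  calc w i = ∑ j, Q j (Pc j (w i)) := eq_sum_apply_of_sum_mul_eq_one hid _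
    _ = Q i (Pc i (w i)) :=
      sum_eq_single i (fun j _ hji => by rw [hker i j hji.symm (hw i), map_zero]) (by simp)
    _ = Q i (Pc i (∑ j, w j)) := by rw [hPc_sum]

theorem existsUnique_sum_eq_of_mem_ker (hPt : ∀ i, P i * Pc i = Pt)
    (hPQ : ∀ i, Commute (P i) (Q i)) (hker : ∀ i j, i ≠ j → ker (P i) ≤ ker (Pc j))
    (hid : ∑ i, Q i * Pc i = 1) {u : M} (hu : u ∈ ker Pt) :
    ∃! w : ι → M, (∀ i, w i ∈ ker (P i)) ∧ u = ∑ i, w i :=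
  ⟨fun i => Q i (Pc i u),
    ⟨apply_mem_ker_of_mem_ker hPt hPQ hu, eq_sum_apply_of_sum_mul_eq_one hid u⟩,
    fun _ ⟨hw, hu⟩ => funext fun i => hu ▸ eq_apply_sum_of_mem_ker hid hker hw i⟩

end Decomposition

/-- range and kernel of a decomposed operator. -/
theorem stmt2 {F : Type*} [Field F] {V : Type*} [AddCommGroup V] [Module F V]
    (ℓ : ℕ) (P Q : Fin (ℓ + 1) → Module.End F V)
    (hPP : ∀ i j, P i * P j = P j * P i)
    (hPQ : ∀ i j, P i * Q j = Q j * P i)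
    (Pt : Module.End F V) (hPt : Pt = (List.ofFn P).prod)
    (Pc : Fin (ℓ + 1) → Module.End F V)
    (hPc : ∀ i, Pc i = (List.ofFn fun j => if j = i then (1 : Module.End F V) else P j).prod)
    (hid : (1 : Module.End F V) = ∑ i, Q i * Pc i) :
    range Pt = ⨅ i, range (P i) ∧
    (∀ u ∈ ker Pt, ∃! w : Fin (ℓ + 1) → V,
      (∀ i, w i ∈ ker (P i)) ∧ u = ∑ i, w i) := by
  have hmul (i) : P i * Pc i = Pt := by
    rw [hPt, hPc, List.prod_ofFn_eq_mul_prod_ofFn_ite hPP i]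
  have hcomm (i) : Commute (P i) (Pc i) := hPc i ▸ Commute.prod_ofFn_ite (hPP i) i
  have hQPt (i) : Commute (Q i) Pt :=
    hPt ▸ Commute.list_prod_right _ _ (List.forall_mem_ofFn_iff.mpr fun j => (hPQ j i).symm)
  have hker (i j) (hij : i ≠ j) : ker (P i) ≤ ker (Pc j) := by
    obtain ⟨r, hr⟩ := List.exists_prod_ofFn_ite_eq_mul hPP hij
    rw [hPc, hr]
    exact ker_le_ker_comp (P i) r
  exact ⟨range_eq_iInf_range hmul hcomm hQPt hid.symm,
    fun u hu => existsUnique_sum_eq_of_mem_ker hmul (fun i => hPQ i i) hker hid.symm hu⟩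
end

section
/- Let V be a vector space over an algebraically closed field F, D : V → V linear, and P = P[D] polynomial in D of degree ≥ 1. Then (μ, u) is an eigenvalue–eigenvector pair for P (i.e. Pu = μu, u ≠ 0) if and only if u = u₁ + … + u_k for some k ≥ 1, with each uᵢ ≠ 0 satisfying (D − λᵢ)^{pᵢ}uᵢ = 0, where λ₁,…,λ_k are distinct roots of the polynomial P[x] − μ with respective multiplicities pᵢ. -/
/-!
`P(D) u = μ u` says that `u` lies in the kernel of `(P - μ)(D)`. Over an algebraically closed
field `P - μ` is a unit times the product of the pairwise coprime factors `(X - λᵢ) ^ pᵢ`, so this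
kernel is the sum of the generalised eigenspaces `ker (D - λᵢ) ^ pᵢ`. Generalised eigenspaces for
distinct eigenvalues are independent, so a vector of this sum is nonzero exactly when it has a
nonzero component, and its nonzero components give the required decomposition.
-/

open LinearMap Polynomial

theorem iSupIndep.mem_biSup_and_ne_zero_iff {R N ι : Type*} [Ring R] [AddCommGroup N]
    [Module R N] {p : ι → Submodule R N} (hp : iSupIndep p) (t : Finset ι) (u : N) :
    (u ∈ ⨆ i ∈ t, p i ∧ u ≠ 0) ↔
      ∃ s : Finset ι, s.Nonempty ∧ s ⊆ t ∧
        ∃ w : ι → N, (∀ i ∈ s, w i ≠ 0 ∧ w i ∈ p i) ∧ u = ∑ i ∈ s, w i := by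
  classical
  constructor
  · rintro ⟨hu, hu0⟩
    obtain ⟨w, rfl⟩ := (Submodule.mem_iSup_finset_iff_exists_sum p u).1 hu
    refine ⟨t.filter fun i => (w i : N) ≠ 0, ?_, Finset.filter_subset _ _, fun i => w i,
      fun i hi => ⟨(Finset.mem_filter.1 hi).2, (w i).2⟩, (Finset.sum_filter_ne_zero _).symm⟩
    by_contra hempty
    rw [Finset.not_nonempty_iff_eq_empty, Finset.filter_eq_empty_iff] at hempty
    exact hu0 (Finset.sum_eq_zero fun i hi => not_not.1 (hempty hi))
  · rintro ⟨s, ⟨a, ha⟩, hst, w, hw, rfl⟩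
    refine ⟨SetLike.le_def.1 (biSup_mono fun i hi => hst hi)
      (Submodule.sum_mem_biSup fun i hi => (hw i hi).2), fun h0 => (hw a ha).1 ?_⟩
    have hrest : w a = -∑ i ∈ s.erase a, w i := by
      rw [eq_neg_iff_add_eq_zero, Finset.add_sum_erase s w ha, h0]
    have hmem : w a ∈ ⨆ i ∈ (s.erase a : Set ι), p i := by
      rw [hrest]
      exact neg_mem (Submodule.sum_mem_biSup fun i hi => (hw i (Finset.mem_of_mem_erase hi)).2)
    exact Submodule.disjoint_def.1 (hp.disjoint_biSup (Finset.notMem_erase a s)) _ (hw a ha).2 hmem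

namespace Polynomial

section CommRing

variable {R M : Type*} [CommRing R] [AddCommGroup M] [Module R M] (f : Module.End R M)

lemma ker_aeval_mono_of_dvd {p q : R[X]} (h : p ∣ q) : ker (aeval f p) ≤ ker (aeval f q) := by
  obtain ⟨c, rfl⟩ := h
  intro x hx
  rw [mem_ker] at hx ⊢
  rw [mul_comm, map_mul, Module.End.mul_apply, hx, map_zero]

lemma ker_aeval_eq_of_associated {p q : R[X]} (h : Associated p q) :
    ker (aeval f p) = ker (aeval f q) :=
  le_antisymm (ker_aeval_mono_of_dvd f h.dvd) (ker_aeval_mono_of_dvd f h.symm.dvd)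

lemma ker_aeval_prod_eq_iSup_of_pairwise_isCoprime {ι : Type*} {s : Finset ι} {p : ι → R[X]}
    (hp : (s : Set ι).Pairwise fun i j => IsCoprime (p i) (p j)) :
    ker (aeval f (∏ i ∈ s, p i)) = ⨆ i ∈ s, ker (aeval f (p i)) := by
  classical
  induction s using Finset.induction_on with
  | empty => simp [Module.End.one_eq_id]
  | insert a s ha ih =>
    rw [Finset.coe_insert, Set.pairwise_insert_of_notMem (Finset.mem_coe.not.2 ha)] at hp
    have hcop : IsCoprime (p a) (∏ i ∈ s, p i) :=
      IsCoprime.prod_right fun i hi => (hp.2 i hi).1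
    rw [Finset.prod_insert ha, ← sup_ker_aeval_eq_ker_aeval_mul_of_coprime f hcop, ih hp.1,
      Finset.iSup_insert]

lemma ker_aeval_X_sub_C_pow (r : R) (k : ℕ) :
    ker (aeval f ((X - C r) ^ k)) = f.genEigenspace r k := by
  rw [Module.End.genEigenspace_nat, map_pow, map_sub, aeval_X, aeval_C,
    Algebra.algebraMap_eq_smul_one]

end CommRing

lemma ker_aeval_eq_iSup_genEigenspace {K V : Type*} [Field K] [DecidableEq K] [AddCommGroup V]
    [Module K V] (f : Module.End K V) {Q : K[X]} (hQ : Q.Splits) (hQ0 : Q ≠ 0) :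
    ker (aeval f Q) = ⨆ r ∈ Q.roots.toFinset, f.genEigenspace r (rootMultiplicity r Q) := by
  have hassoc : Associated (∏ r ∈ Q.roots.toFinset, (X - C r) ^ rootMultiplicity r Q) Q := by
    rw [← prod_multiset_root_eq_finset_root]
    conv_rhs => rw [hQ.eq_prod_roots]
    exact (associated_unit_mul_left _ _ (isUnit_C.2 (leadingCoeff_ne_zero.2 hQ0).isUnit)).symm
  rw [← ker_aeval_eq_of_associated f hassoc, ker_aeval_prod_eq_iSup_of_pairwise_isCoprime]
  · simp_rw [ker_aeval_X_sub_C_pow]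
  · intro a _ b _ hab
    exact (pairwise_coprime_X_sub_C Function.injective_id hab).pow

end Polynomial

/-- eigenvectors of `P[D]` are sums of generalised
eigenvectors of `D` for the roots of `P[x] − μ`. -/
theorem stmt13 {F : Type*} [Field F] [IsAlgClosed F] [DecidableEq F]
    {V : Type*} [AddCommGroup V] [Module F V]
    (D : Module.End F V) (P : F[X]) (hP : 1 ≤ P.degree) (mu : F) (u : V) :
    ((aeval D P) u = mu • u ∧ u ≠ 0) ↔
      ∃ s : Finset F, s.Nonempty ∧ s ⊆ (P - C mu).roots.toFinset ∧
        ∃ w : F → V,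
          (∀ r ∈ s, w r ≠ 0 ∧
            ((D - r • (1 : Module.End F V)) ^ (rootMultiplicity r (P - C mu))) (w r) = 0) ∧
          u = ∑ r ∈ s, w r := by
  have hQ0 : P - C mu ≠ 0 :=
    ne_zero_of_coe_le_degree (n := 1) (by rwa [degree_sub_C (zero_lt_one.trans_le hP)])
  have heigen : aeval D P u = mu • u ↔ u ∈ ker (aeval D (P - C mu)) := by
    rw [mem_ker, map_sub, LinearMap.sub_apply, aeval_C, Algebra.algebraMap_eq_smul_one,
      LinearMap.smul_apply, Module.End.one_apply, sub_eq_zero]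
  have hindep : iSupIndep fun r => D.genEigenspace r (rootMultiplicity r (P - C mu)) :=
    (D.independent_genEigenspace ⊤).mono fun r => (D.genEigenspace r).monotone le_top
  rw [heigen, ker_aeval_eq_iSup_genEigenspace D (IsAlgClosed.splits _) hQ0,
    hindep.mem_biSup_and_ne_zero_iff]
  simp only [Module.End.mem_genEigenspace_nat, mem_ker]
end

section
/- Let V be a vector space over a field F and P = P₀P₁⋯P_ℓ a decomposition: the Pᵢ mutually commute, and there exist Qᵢ commuting with all P_j with id_V = ∑ᵢ QᵢPⁱ (Pⁱ = ∏_{j≠i}P_j). Let W_{ij} denote the space of linear maps from ker(P_j) to ker(Pᵢ), and let W_P denote the space of linear maps from ker(P) to ker(P). Then there is a linear isomorphism W_P ≅ ⊕_{i,j=0}^{ℓ} W_{ij}, given by S ↦ (Projᵢ ∘ S ∘ Proj_j)_{i,j} with inverse (H_{ij}) ↦ ∑_{i,j} H_{ij} ∘ Proj_j, where Projᵢ = QᵢPⁱ restricted to ker(P). -/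
open LinearMap

/-- Pull out the `i`-th factor of a product of pairwise commuting elements. -/
private lemma aux_prod_left {M : Type*} [Monoid M] : ∀ {n : ℕ} (g : Fin n → M),
    (∀ a b, Commute (g a) (g b)) → ∀ (i : Fin n),
    (List.ofFn g).prod = g i * (List.ofFn fun j => if j = i then 1 else g j).prod := by
  intro n
  induction n with
  | zero => intro g _ i; exact i.elim0
  | succ m ih =>
    intro g hg i
    refine Fin.cases ?_ ?_ i
    · simp [List.ofFn_succ, Fin.succ_ne_zero]
    · intro k
      have h1 : (List.ofFn fun j => g (Fin.succ j)).prod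
          = g k.succ * (List.ofFn fun j => if j = k then 1 else g (Fin.succ j)).prod :=
        ih (fun j => g (Fin.succ j)) (fun a b => hg _ _) k
      have h2 : (List.ofFn fun j : Fin (m+1) => if j = k.succ then 1 else g j)
          = g 0 :: List.ofFn fun j => if j = k then 1 else g (Fin.succ j) := by
        rw [List.ofFn_succ]
        simp [Fin.succ_inj, (Fin.succ_ne_zero k).symm]
      rw [List.ofFn_succ, List.prod_cons, h1, h2, List.prod_cons,
        ← mul_assoc, ← mul_assoc, (hg 0 k.succ).eq]

private lemma aux_comm_prod {M : Type*} [Monoid M] {n : ℕ} (g : Fin n → M)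
    (a : M) (ha : ∀ b, Commute a (g b)) :
    ∀ (l : List M), (∀ x ∈ l, x = 1 ∨ ∃ b, x = g b) → Commute a l.prod := by
  intro l hl
  refine Commute.list_prod_right _ _ ?_
  intro x hx
  rcases hl x hx with h | ⟨b, h⟩
  · simp [h]
  · rw [h]; exact ha b

/-- Pull out the `i`-th factor of a product of pairwise commuting elements, on the right. -/
private lemma aux_prod_right {M : Type*} [Monoid M] {n : ℕ} (g : Fin n → M)
    (hg : ∀ a b, Commute (g a) (g b)) (i : Fin n) :
    (List.ofFn g).prod = (List.ofFn fun j => if j = i then 1 else g j).prod * g i := by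
  rw [aux_prod_left g hg i]
  have : Commute (g i) (List.ofFn fun j => if j = i then 1 else g j).prod := by
    refine aux_comm_prod g (g i) (fun b => hg i b) _ ?_
    intro x hx
    rw [List.mem_ofFn] at hx
    obtain ⟨j, rfl⟩ := hx
    by_cases h : j = i
    · left; simp [h]
    · right; exact ⟨j, by simp [h]⟩
  exact this.eq

/-- the space of weak symmetries `End(ker P)` of a decomposed
operator decomposes as `⊕_{i,j} Hom(ker P_j, ker P_i)`. -/
theorem stmt16 {F : Type*} [Field F] {V : Type*} [AddCommGroup V] [Module F V]
    (ℓ : ℕ) (P Q : Fin (ℓ + 1) → Module.End F V)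
    (hPP : ∀ i j, P i * P j = P j * P i)
    (hPQ : ∀ i j, P i * Q j = Q j * P i)
    (Pt : Module.End F V) (hPt : Pt = (List.ofFn P).prod)
    (Pc : Fin (ℓ + 1) → Module.End F V)
    (hPc : ∀ i, Pc i = (List.ofFn fun j => if j = i then (1 : Module.End F V) else P j).prod)
    (hid : (1 : Module.End F V) = ∑ i, Q i * Pc i) :
    ∃ e : ((ker Pt →ₗ[F] ker Pt) ≃ₗ[F]
        (∀ i : Fin (ℓ + 1), ∀ j : Fin (ℓ + 1), (ker (P j) →ₗ[F] ker (P i)))),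
      (∀ (S : ker Pt →ₗ[F] ker Pt) (i j : Fin (ℓ + 1)) (u : V)
          (hu : u ∈ ker (P j)) (hu' : u ∈ ker Pt),
        ((e S i j ⟨u, hu⟩ : ker (P i)) : V) = (Q i * Pc i) ((S ⟨u, hu'⟩ : V))) ∧
      (∀ (H : ∀ i : Fin (ℓ + 1), ∀ j : Fin (ℓ + 1), (ker (P j) →ₗ[F] ker (P i)))
          (w : V) (hw : w ∈ ker Pt)
          (hm : ∀ j : Fin (ℓ + 1), (Q j * Pc j) w ∈ ker (P j)),
        ((e.symm H ⟨w, hw⟩ : ker Pt) : V) =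
          ∑ i, ∑ j, ((H i j ⟨(Q j * Pc j) w, hm j⟩ : ker (P i)) : V)) := by
  have hPPc : ∀ i, Pt = P i * Pc i := by
    intro i
    rw [hPt, hPc]
    exact aux_prod_left P (fun a b => hPP a b) i
  have hPcP : ∀ i, Pt = Pc i * P i := by
    intro i
    rw [hPt, hPc]
    exact aux_prod_right P (fun a b => hPP a b) i
  -- ker (P j) ≤ ker Pt
  have hker : ∀ j, ker (P j) ≤ ker Pt := by
    intro j x hx
    rw [mem_ker] at hx ⊢
    rw [hPcP j, Module.End.mul_apply, hx, map_zero]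
  -- projection lands in ker (P i)
  have hproj_mem : ∀ i, ∀ x ∈ ker Pt, (Q i * Pc i) x ∈ ker (P i) := by
    intro i x hx
    rw [mem_ker] at hx ⊢
    have : P i * (Q i * Pc i) = Q i * Pt := by
      rw [← mul_assoc, hPQ i i, mul_assoc, ← hPPc i]
    calc P i ((Q i * Pc i) x) = (P i * (Q i * Pc i)) x := rfl
      _ = Q i (Pt x) := by rw [this]; rfl
      _ = 0 := by rw [hx, map_zero]
  -- Pc i vanishes on ker (P j) for j ≠ i
  have hzero : ∀ i j, j ≠ i → ∀ x ∈ ker (P j), Pc i x = 0 := by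
    intro i j hij x hx
    rw [mem_ker] at hx
    have hPcfac : Pc i = (List.ofFn fun k =>
        if k = j then 1 else if k = i then (1 : Module.End F V) else P k).prod *
        (if j = i then (1 : Module.End F V) else P j) := by
      rw [hPc]
      exact aux_prod_right (fun k => if k = i then (1 : Module.End F V) else P k)
        (fun a b => by
          by_cases ha : a = i <;> by_cases hb : b = i <;>
            simp [ha, hb, Commute, SemiconjBy, hPP a b]) j
    rw [hPcfac]
    simp only [hij, if_neg]
    calc _ = (List.ofFn fun k => if k = j then 1
          else if k = i then (1 : Module.End F V) else P k).prod (P j x) := rfl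
      _ = 0 := by rw [hx, map_zero]
  -- the projections restrict to the identity on each ker (P j)
  have hone : ∀ j, ∀ x ∈ ker (P j), (Q j * Pc j) x = x := by
    intro j x hx
    have h1 : ∑ i, (Q i * Pc i) x = (Q j * Pc j) x := by
      refine Finset.sum_eq_single j ?_ ?_
      · intro i _ hij
        have h0 : Pc i x = 0 := hzero i j (fun h => hij h.symm) x hx
        calc (Q i * Pc i) x = Q i (Pc i x) := rfl
          _ = 0 := by rw [h0, map_zero]
      · intro h; exact absurd (Finset.mem_univ j) h
    calc (Q j * Pc j) x = ∑ i, (Q i * Pc i) x := h1.symm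
      _ = (∑ i, Q i * Pc i) x := (LinearMap.sum_apply _ _ _).symm
      _ = x := by rw [← hid]; rfl
  -- building blocks
  set prj : ∀ i, ker Pt →ₗ[F] ker (P i) :=
    fun i => (Q i * Pc i).restrict (fun x hx => hproj_mem i x hx) with hprj
  set inc : ∀ j, ker (P j) →ₗ[F] ker Pt := fun j => Submodule.inclusion (hker j) with hinc
  have prj_inc_same : ∀ j (u : ker (P j)), prj j (inc j u) = u := by
    intro j u
    apply Subtype.ext
    exact hone j u.1 u.2
  have prj_inc_ne : ∀ i j, i ≠ j → ∀ (u : ker (P j)), prj i (inc j u) = 0 := by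
    intro i j hij u
    apply Subtype.ext
    show (Q i * Pc i) u.1 = 0
    have : Pc i u.1 = 0 := hzero i j (fun h => hij h.symm) u.1 u.2
    calc (Q i * Pc i) u.1 = Q i (Pc i u.1) := rfl
      _ = 0 := by rw [this, map_zero]
  have hsum : ∀ (u : ker Pt), ∑ j, inc j (prj j u) = u := by
    intro u
    apply Subtype.ext
    rw [Submodule.coe_sum]
    calc ∑ j, ((inc j (prj j u) : ker Pt) : V) = ∑ j, (Q j * Pc j) u.1 := rfl
      _ = (∑ j, Q j * Pc j) u.1 := by rw [LinearMap.sum_apply]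
      _ = u.1 := by rw [← hid]; rfl
  -- the two linear maps
  set e₁ : (ker Pt →ₗ[F] ker Pt) →ₗ[F]
      (∀ i : Fin (ℓ + 1), ∀ j : Fin (ℓ + 1), (ker (P j) →ₗ[F] ker (P i))) :=
    { toFun := fun S i j => (prj i).comp (S.comp (inc j))
      map_add' := by
        intro S T; funext i j; ext u
        simp
      map_smul' := by
        intro c S; funext i j; ext u
        simp } with he₁
  set e₂ : (∀ i : Fin (ℓ + 1), ∀ j : Fin (ℓ + 1), (ker (P j) →ₗ[F] ker (P i))) →ₗ[F]
      (ker Pt →ₗ[F] ker Pt) :=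
    { toFun := fun H => ∑ i, ∑ j, (inc i).comp ((H i j).comp (prj j))
      map_add' := by
        intro H K
        rw [← Finset.sum_add_distrib]
        refine Finset.sum_congr rfl fun i _ => ?_
        rw [← Finset.sum_add_distrib]
        refine Finset.sum_congr rfl fun j _ => ?_
        ext u; simp
      map_smul' := by
        intro c H
        show (∑ i, ∑ j, (inc i).comp (((c • H) i j).comp (prj j)))
            = c • ∑ i, ∑ j, (inc i).comp ((H i j).comp (prj j))
        rw [Finset.smul_sum]
        refine Finset.sum_congr rfl fun i _ => ?_
        rw [Finset.smul_sum]
        refine Finset.sum_congr rfl fun j _ => ?_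
        ext u; simp } with he₂
  have h12 : e₁.comp e₂ = LinearMap.id := by
    refine LinearMap.ext fun H => ?_
    funext i j
    refine LinearMap.ext fun u => ?_
    show prj i ((∑ i', ∑ j', (inc i').comp ((H i' j').comp (prj j'))) (inc j u)) = H i j u
    rw [LinearMap.sum_apply, map_sum]
    rw [Finset.sum_eq_single i]
    · rw [LinearMap.sum_apply, map_sum, Finset.sum_eq_single j]
      · show prj i (inc i (H i j (prj j (inc j u)))) = H i j u
        rw [prj_inc_same j u, prj_inc_same i]
      · intro j' _ hj'
        show prj i (inc i (H i j' (prj j' (inc j u)))) = 0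
        rw [prj_inc_ne j' j hj' u, map_zero, map_zero, map_zero]
      · intro h; exact absurd (Finset.mem_univ j) h
    · intro i' _ hi'
      rw [LinearMap.sum_apply, map_sum]
      refine Finset.sum_eq_zero fun j' _ => ?_
      show prj i (inc i' (H i' j' (prj j' (inc j u)))) = 0
      rw [prj_inc_ne i i' hi'.symm, ]
    · intro h; exact absurd (Finset.mem_univ i) h
  have h21 : e₂.comp e₁ = LinearMap.id := by
    refine LinearMap.ext fun S => LinearMap.ext fun u => ?_
    show (∑ i, ∑ j, (inc i).comp ((((prj i).comp (S.comp (inc j)))).comp (prj j))) u = S u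
    rw [LinearMap.sum_apply]
    calc ∑ i, (∑ j, (inc i).comp ((((prj i).comp (S.comp (inc j)))).comp (prj j))) u
        = ∑ i, inc i (prj i (S (∑ j, inc j (prj j u)))) := by
          refine Finset.sum_congr rfl fun i _ => ?_
          rw [LinearMap.sum_apply]
          simp only [LinearMap.comp_apply, map_sum]
      _ = ∑ i, inc i (prj i (S u)) := by rw [hsum u]
      _ = S u := hsum (S u)
  refine ⟨LinearEquiv.ofLinear e₁ e₂ h12 h21, ?_, ?_⟩
  · intro S i j u hu hu'
    rfl
  · intro H w hw hm
    rw [LinearEquiv.ofLinear_symm_apply]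
    show ((∑ i, ∑ j, (inc i).comp ((H i j).comp (prj j))) ⟨w, hw⟩ : V) = _
    rw [LinearMap.sum_apply, Submodule.coe_sum]
    refine Finset.sum_congr rfl fun i _ => ?_
    rw [LinearMap.sum_apply, Submodule.coe_sum]
    refine Finset.sum_congr rfl fun j _ => ?_
    rfl
end

section
/- Let V be a vector space, D : V → V linear, and S : V → V a linear map that preserves every generalized eigenspace of D, i.e. for all λ and all p ≥ 1, S maps ker((D−λ)^p) into itself. Then for any polynomial P[x] over an algebraically closed field, S preserves every eigenspace of P[D]: if P[D]u = μu then P[D](Su) = μ(Su). -/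
open LinearMap Polynomial

private lemma stmt17_const {F : Type*} [Field F]
    {V : Type*} [AddCommGroup V] [Module F V]
    (D S : Module.End F V) {Q : F[X]} (hQ : Q ≠ 0) (hd : Q.natDegree = 0)
    {u : V} (hu : (aeval D Q) u = 0) : (aeval D Q) (S u) = 0 := by
  obtain ⟨a, rfl⟩ := Polynomial.natDegree_eq_zero.mp hd
  have ha : a ≠ 0 := by simpa using hQ
  have : u = 0 := by
    have : a • u = 0 := by simpa [Module.algebraMap_end_eq_smul_id] using hu
    exact (smul_eq_zero.mp this).resolve_left ha
  simp [this]

private lemma stmt17_key {F : Type*} [Field F] [IsAlgClosed F]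
    {V : Type*} [AddCommGroup V] [Module F V]
    (D S : Module.End F V)
    (hS : ∀ (lam : F) (p : ℕ), 1 ≤ p → ∀ u : V,
      ((D - lam • (1 : Module.End F V)) ^ p) u = 0 →
      ((D - lam • (1 : Module.End F V)) ^ p) (S u) = 0) :
    ∀ (n : ℕ) (Q : F[X]), Q.natDegree ≤ n → Q ≠ 0 → ∀ u : V,
      (aeval D Q) u = 0 → (aeval D Q) (S u) = 0 := by
  intro n
  induction n with
  | zero =>
    intro Q hdeg hQ u hu
    exact stmt17_const D S hQ (Nat.le_zero.mp hdeg) hu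
  | succ n ih =>
    intro Q hdeg hQ u hu
    by_cases hd : Q.natDegree = 0
    · exact stmt17_const D S hQ hd hu
    · have hdeg0 : Q.degree ≠ 0 := fun h => hd (natDegree_eq_zero_iff_degree_le_zero.mpr h.le)
      obtain ⟨lam, hlam⟩ := IsAlgClosed.exists_root Q hdeg0
      set m := Q.rootMultiplicity lam with hm_def
      set R := Q /ₘ (X - C lam) ^ m with hR_def
      have hfac : (X - C lam) ^ m * R = Q := pow_mul_divByMonic_rootMultiplicity_eq Q lam
      have hRlam : R.eval lam ≠ 0 := eval_divByMonic_pow_rootMultiplicity_ne_zero lam hQ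
      have hR0 : R ≠ 0 := fun h => hRlam (by simp [h])
      have hm : 1 ≤ m := (rootMultiplicity_pos hQ).mpr hlam
      have hcop : IsCoprime ((X - C lam) ^ m) R := by
        apply IsCoprime.pow_left
        rw [(irreducible_X_sub_C lam).coprime_iff_not_dvd]
        intro hdvd
        exact hRlam ((dvd_iff_isRoot).mp hdvd)
      -- aeval of (X - C lam)^m
      have haev : aeval D ((X - C lam) ^ m) = (D - lam • (1 : Module.End F V)) ^ m := by
        rw [map_pow, map_sub, aeval_X, aeval_C, Module.algebraMap_end_eq_smul_id, Module.End.one_eq_id]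
      have hker := sup_ker_aeval_eq_ker_aeval_mul_of_coprime D hcop
      have hu' : u ∈ LinearMap.ker (aeval D ((X - C lam) ^ m * R)) := by
        rw [hfac]; exact hu
      rw [← hker] at hu'
      obtain ⟨v, hv, w, hw, huvw⟩ := Submodule.mem_sup.mp hu'
      have hv' : (aeval D ((X - C lam) ^ m)) v = 0 := hv
      have hw' : (aeval D R) w = 0 := hw
      have hSv : (aeval D ((X - C lam) ^ m)) (S v) = 0 := by
        rw [haev] at hv' ⊢
        exact hS lam m hm v hv'
      have hRdeg : R.natDegree ≤ n := by
        have h1 : Q.natDegree = m + R.natDegree := by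
          conv_lhs => rw [← hfac]
          rw [natDegree_mul (pow_ne_zero m (X_sub_C_ne_zero lam)) hR0,
            natDegree_pow, natDegree_X_sub_C, mul_one]
        omega
      have hSw : (aeval D R) (S w) = 0 := ih R hRdeg hR0 w hw'
      have hSu : S u = S v + S w := by rw [← huvw]; exact map_add S v w
      have : (aeval D Q) (S v) = 0 := by
        rw [← hfac, mul_comm, map_mul, Module.End.mul_apply, hSv, map_zero]
      have h2 : (aeval D Q) (S w) = 0 := by
        rw [← hfac, map_mul, Module.End.mul_apply, hSw, map_zero]
      rw [hSu, map_add, this, h2, add_zero]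

/-- an operator preserving every generalised eigenspace of `D`
is a strong symmetry of every polynomial `P[D]`. -/
theorem stmt17 {F : Type*} [Field F] [IsAlgClosed F]
    {V : Type*} [AddCommGroup V] [Module F V]
    (D S : Module.End F V)
    (hS : ∀ (lam : F) (p : ℕ), 1 ≤ p → ∀ u : V,
      ((D - lam • (1 : Module.End F V)) ^ p) u = 0 →
      ((D - lam • (1 : Module.End F V)) ^ p) (S u) = 0) :
    ∀ (P : F[X]) (mu : F) (u : V),
      (aeval D P) u = mu • u → (aeval D P) (S u) = mu • (S u) := by
  intro P mu u hu
  set Q : F[X] := P - C mu with hQdef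
  have haevQ : ∀ z : V, (aeval D Q) z = (aeval D P) z - mu • z := by
    intro z
    simp [hQdef, map_sub, aeval_C, Module.algebraMap_end_eq_smul_id]
  by_cases hQ : Q = 0
  · have hP : P = C mu := by rwa [hQdef, sub_eq_zero] at hQ
    simp [hP, aeval_C, Module.algebraMap_end_eq_smul_id]
  · have hu0 : (aeval D Q) u = 0 := by rw [haevQ, hu, sub_self]
    have := stmt17_key D S hS Q.natDegree Q le_rfl hQ u hu0
    rw [haevQ, sub_eq_zero] at this
    exact this
end
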